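/- arXiv:2402.11925 — 3 statements merged into one kernel-verified Lean document; each statement's English description precedes it below -/
import Mathlib

section
/- Let $\ell \geq 2$ be a real number, and constants $h, \tau, \nu, t, s > 0$, $\rho \in (0,1]$. Define $\varphi = (h\nu)^{1/(\ell-1)} \cdot \tau / t$ and $p^* = \frac{\varphi \rho^{1/(\ell-1)}}{1 + \varphi \rho^{\ell/(\ell-1)}}\left(s\rho + \frac{\ell}{2}\right)$. Then $p^*$ satisfies the stationarity equation $\frac{\ell (p^*)^{\ell-1}}{h\tau^{\ell-1}} = \frac{\ell \nu \rho}{t^{\ell-1}}\left((s - p^*)\rho + \frac{\ell}{2}\right)^{\ell-1}$. -/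
/-!
With `X = sρ + ℓ/2` and `D = 1 + φ ρ^{ℓ/(ℓ-1)}`, the identity `ρ^{1/(ℓ-1)} ρ = ρ^{ℓ/(ℓ-1)}`
gives `p* ρ = X (D - 1) / D`, so the residual `(s - p*)ρ + ℓ/2` is `X / D`. Raising
`p* = φ ρ^{1/(ℓ-1)} (X / D)` to the power `ℓ - 1` and using `φ^{ℓ-1} = hν τ^{ℓ-1} / t^{ℓ-1}`
turns both sides of the stationarity equation into `ℓ ν ρ (X / D)^{ℓ-1} / t^{ℓ-1}`.
-/

open Real

lemma Real.rpow_one_div_mul_self {x ℓ : ℝ} (hx : 0 < x) (hℓ : ℓ - 1 ≠ 0) :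
    x ^ (1 / (ℓ - 1)) * x = x ^ (ℓ / (ℓ - 1)) := by
  rw [← rpow_add_one hx.ne']
  congr 1
  field_simp
  ring

lemma Real.rpow_one_div_rpow {x a : ℝ} (hx : 0 ≤ x) (ha : a ≠ 0) :
    (x ^ (1 / a)) ^ a = x := by
  rw [one_div, rpow_inv_rpow hx ha]

theorem prefetch_stationarity_general
    (ℓ h τ ν t ρ s : ℝ) (hℓ : 2 ≤ ℓ) (hh : 0 < h) (hτ : 0 < τ)
    (hν : 0 < ν) (ht : 0 < t) (hρ0 : 0 < ρ) (hs : 0 < s)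
    (φ pstar : ℝ)
    (hφ : φ = (h * ν) ^ (1 / (ℓ - 1)) * τ / t)
    (hp : pstar = φ * ρ ^ (1 / (ℓ - 1)) / (1 + φ * ρ ^ (ℓ / (ℓ - 1))) *
        (s * ρ + ℓ / 2)) :
    ℓ * pstar ^ (ℓ - 1) / (h * τ ^ (ℓ - 1)) =
      ℓ * ν * ρ / t ^ (ℓ - 1) * ((s - pstar) * ρ + ℓ / 2) ^ (ℓ - 1) := by
  have ha : ℓ - 1 ≠ 0 := by linarith
  have hφ0 : 0 ≤ φ := by rw [hφ]; positivity
  set X := s * ρ + ℓ / 2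
  set D := 1 + φ * ρ ^ (ℓ / (ℓ - 1))
  have hX : 0 ≤ X := by positivity
  have hD : 0 < D := by positivity
  have hφ_pow : φ ^ (ℓ - 1) = h * ν * τ ^ (ℓ - 1) / t ^ (ℓ - 1) := by
    rw [hφ, div_rpow (by positivity) ht.le, mul_rpow (by positivity) hτ.le,
      rpow_one_div_rpow (by positivity) ha]
  have hresidual : (s - pstar) * ρ + ℓ / 2 = X / D := by
    have hpρ : pstar * ρ = X - X / D := by
      calc pstar * ρ = φ * (ρ ^ (1 / (ℓ - 1)) * ρ) * X / D := by rw [hp]; ring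
        _ = X - X / D := by rw [rpow_one_div_mul_self hρ0 ha]; field_simp; ring
    linear_combination -hpρ
  have hp_pow : pstar ^ (ℓ - 1) = φ ^ (ℓ - 1) * ρ * (X / D) ^ (ℓ - 1) := by
    rw [show pstar = φ * ρ ^ (1 / (ℓ - 1)) * (X / D) by rw [hp]; ring,
      mul_rpow (by positivity) (by positivity), mul_rpow hφ0 (by positivity),
      rpow_one_div_rpow hρ0.le ha]
  rw [hresidual, hp_pow, hφ_pow]
  field_simp

theorem prefetch_stationarity
    (ℓ h τ ν t ρ s : ℝ) (hℓ : 2 ≤ ℓ) (hh : 0 < h) (hτ : 0 < τ)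
    (hν : 0 < ν) (ht : 0 < t) (hρ0 : 0 < ρ) (hρ1 : ρ ≤ 1) (hs : 0 < s)
    (φ pstar : ℝ)
    (hφ : φ = (h * ν) ^ (1 / (ℓ - 1)) * τ / t)
    (hp : pstar = φ * ρ ^ (1 / (ℓ - 1)) / (1 + φ * ρ ^ (ℓ / (ℓ - 1))) *
        (s * ρ + ℓ / 2)) :
    ℓ * pstar ^ (ℓ - 1) / (h * τ ^ (ℓ - 1)) =
      ℓ * ν * ρ / t ^ (ℓ - 1) * ((s - pstar) * ρ + ℓ / 2) ^ (ℓ - 1) :=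
  prefetch_stationarity_general ℓ h τ ν t ρ s hℓ hh hτ hν ht hρ0 hs φ pstar hφ hp
end

section
/- Let $\ell \geq 2$, $h, \tau, \nu, t, s > 0$, $\rho \in (0,1]$, and let $f(p) = \frac{p^\ell}{h\tau^{\ell-1}} + \frac{\nu}{t^{\ell-1}}\left((s-p)\rho + \frac{\ell}{2}\right)^\ell$. Define $\varphi = (h\nu)^{1/(\ell-1)} \tau / t$ and $p^* = \frac{\varphi \rho^{1/(\ell-1)}}{1 + \varphi \rho^{\ell/(\ell-1)}}\left(s\rho + \frac{\ell}{2}\right)$. If $p^* \leq s$, then $f(p^*) \leq f(p)$ for all $p \in [0, s]$. -/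
/-!
Both summands of `f` are convex powers, so `f` lies above the sum of their tangent lines at
`p*`. The closed form of `p*` is the solution of the fixed-point equation
`p* = φ ρ^{1/(ℓ-1)} ((s - p*) ρ + ℓ/2)`; raising it to the power `ℓ - 1` gives exactly the
stationarity condition `f'(p*) = 0`, so the two tangent slopes cancel and the tangent sum is the
constant `f(p*)`.
-/

open Real

lemma Real.rpow_add_mul_rpow_sub_one_mul_sub_le {ℓ a x : ℝ} (hℓ : 1 ≤ ℓ) (ha : 0 < a)
    (hx : 0 ≤ x) : a ^ ℓ + ℓ * a ^ (ℓ - 1) * (x - a) ≤ x ^ ℓ := by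
  have hbernoulli : 1 + ℓ * (x / a - 1) ≤ (x / a) ^ ℓ := by
    simpa using one_add_mul_self_le_rpow_one_add
      (by linarith [div_nonneg hx ha.le] : -1 ≤ x / a - 1) hℓ
  have haℓ : 0 < a ^ ℓ := rpow_pos_of_pos ha ℓ
  calc a ^ ℓ + ℓ * a ^ (ℓ - 1) * (x - a)
      = a ^ ℓ * (1 + ℓ * (x / a - 1)) := by
        rw [rpow_sub_one ha.ne']; field_simp
    _ ≤ a ^ ℓ * (x / a) ^ ℓ := mul_le_mul_of_nonneg_left hbernoulli haℓ.le
    _ = x ^ ℓ := by rw [div_rpow hx ha.le]; field_simp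

lemma mul_rpow_add_mul_sub_rpow_le_of_stationary {ℓ A B c ρ a x : ℝ} (hℓ : 1 ≤ ℓ)
    (hA : 0 ≤ A) (hB : 0 ≤ B) (ha : 0 < a) (hqa : 0 < c - ρ * a) (hx : 0 ≤ x)
    (hqx : 0 ≤ c - ρ * x) (hstat : A * a ^ (ℓ - 1) = B * ρ * (c - ρ * a) ^ (ℓ - 1)) :
    A * a ^ ℓ + B * (c - ρ * a) ^ ℓ ≤ A * x ^ ℓ + B * (c - ρ * x) ^ ℓ := by
  have htangent₁ := mul_le_mul_of_nonneg_left
    (rpow_add_mul_rpow_sub_one_mul_sub_le hℓ ha hx) hA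
  have htangent₂ := mul_le_mul_of_nonneg_left
    (rpow_add_mul_rpow_sub_one_mul_sub_le hℓ hqa hqx) hB
  have hslopes : A * (ℓ * a ^ (ℓ - 1) * (x - a))
      + B * (ℓ * (c - ρ * a) ^ (ℓ - 1) * (c - ρ * x - (c - ρ * a))) = 0 := by
    linear_combination ℓ * (x - a) * hstat
  linear_combination htangent₁ + htangent₂ - hslopes

lemma eq_mul_sub_of_eq_div_one_add_mul {k ρ c a : ℝ} (hk : 1 + k * ρ ≠ 0)
    (ha : a = k / (1 + k * ρ) * c) : a = k * (c - ρ * a) := by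
  rw [ha]; field_simp; ring

lemma prefetch_stationary {e h ν τ t ρ q : ℝ} (he : e ≠ 0) (hh : 0 < h) (hν : 0 ≤ ν)
    (hτ : 0 < τ) (ht : 0 ≤ t) (hρ : 0 ≤ ρ) (hq : 0 ≤ q) :
    (h * τ ^ e)⁻¹ * ((h * ν) ^ (1 / e) * τ / t * ρ ^ (1 / e) * q) ^ e
      = ν / t ^ e * ρ * q ^ e := by
  rw [one_div, mul_rpow (by positivity) hq, mul_rpow (by positivity) (by positivity),
    div_rpow (by positivity) ht, mul_rpow (by positivity) hτ.le, rpow_inv_rpow (by positivity) he,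
    rpow_inv_rpow hρ he]
  field_simp

theorem prefetch_global_optimality_general
    (ℓ h τ ν t ρ s : ℝ) (hℓ : 2 ≤ ℓ) (hh : 0 < h) (hτ : 0 < τ)
    (hν : 0 < ν) (ht : 0 < t) (hρ0 : 0 < ρ)
    (f : ℝ → ℝ)
    (hf : f = fun p : ℝ =>
      p ^ ℓ / (h * τ ^ (ℓ - 1)) + ν / t ^ (ℓ - 1) * ((s - p) * ρ + ℓ / 2) ^ ℓ)
    (φ pstar : ℝ)
    (hφ : φ = (h * ν) ^ (1 / (ℓ - 1)) * τ / t)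
    (hp : pstar = φ * ρ ^ (1 / (ℓ - 1)) / (1 + φ * ρ ^ (ℓ / (ℓ - 1))) *
        (s * ρ + ℓ / 2))
    (hps : pstar ≤ s) :
    ∀ p ∈ Set.Icc (0 : ℝ) s, f pstar ≤ f p := by
  rintro p ⟨hp0, hpi⟩
  have hℓ1 : ℓ - 1 ≠ 0 := by linarith
  have hφ0 : 0 < φ := by rw [hφ]; positivity
  have hρpow : ρ ^ (ℓ / (ℓ - 1)) = ρ ^ (1 / (ℓ - 1)) * ρ := by
    rw [← rpow_add_one hρ0.ne']; congr 1; field_simp; ring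
  set q := s * ρ + ℓ / 2 - ρ * pstar with hq_def
  have hfix : pstar = φ * ρ ^ (1 / (ℓ - 1)) * q :=
    eq_mul_sub_of_eq_div_one_add_mul (by positivity) (by rw [hp, hρpow, mul_assoc])
  have hq : 0 < q := by linarith [mul_nonneg (sub_nonneg.2 hps) hρ0.le]
  have hpstar : 0 < pstar := by rw [hfix]; positivity
  have hstat : (h * τ ^ (ℓ - 1))⁻¹ * pstar ^ (ℓ - 1) = ν / t ^ (ℓ - 1) * ρ * q ^ (ℓ - 1) := by
    rw [hfix, hφ]
    exact prefetch_stationary hℓ1 hh hν.le hτ ht.le hρ0.le hq.le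
  have hmin := mul_rpow_add_mul_sub_rpow_le_of_stationary (by linarith) (by positivity)
    (by positivity) hpstar hq hp0 (by linarith [mul_nonneg (sub_nonneg.2 hpi) hρ0.le]) hstat
  have haffine : ∀ x, (s - x) * ρ + ℓ / 2 = s * ρ + ℓ / 2 - ρ * x := fun x => by ring
  simpa only [hf, ← haffine, ← div_eq_inv_mul] using hmin

theorem prefetch_global_optimality
    (ℓ h τ ν t ρ s : ℝ) (hℓ : 2 ≤ ℓ) (hh : 0 < h) (hτ : 0 < τ)
    (hν : 0 < ν) (ht : 0 < t) (hρ0 : 0 < ρ) (hρ1 : ρ ≤ 1) (hs : 0 < s)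
    (f : ℝ → ℝ)
    (hf : f = fun p : ℝ =>
      p ^ ℓ / (h * τ ^ (ℓ - 1)) + ν / t ^ (ℓ - 1) * ((s - p) * ρ + ℓ / 2) ^ ℓ)
    (φ pstar : ℝ)
    (hφ : φ = (h * ν) ^ (1 / (ℓ - 1)) * τ / t)
    (hp : pstar = φ * ρ ^ (1 / (ℓ - 1)) / (1 + φ * ρ ^ (ℓ / (ℓ - 1))) *
        (s * ρ + ℓ / 2))
    (hps : pstar ≤ s) :
    ∀ p ∈ Set.Icc (0 : ℝ) s, f pstar ≤ f p :=
  prefetch_global_optimality_general ℓ h τ ν t ρ s hℓ hh hτ hν ht hρ0 f hf φ pstar hφ hp hps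
end

section
/- Let $n$ be a binomial random variable with parameters $N \in \mathbb{N}$ and success probability $\rho \in [0,1]$, and let $\ell \geq 1$ be a natural number. Then $\mathbb{E}[n^\ell] \leq (N\rho + \ell/2)^\ell$. -/
/-! Moment-generating-function argument: for every `t > 0`, `e · (t x / ℓ) ≤ exp (t x / ℓ)` gives
`x ^ ℓ ≤ (ℓ / (e t)) ^ ℓ · exp (t x)`, hence
`E[n ^ ℓ] ≤ (ℓ / (e t)) ^ ℓ · (1 + ρ (e ^ t - 1)) ^ N ≤ (ℓ / (e t)) ^ ℓ · exp (μ (e ^ t - 1))` with `μ = N ρ`.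
For `t = ℓ / (μ + ℓ / 2)` the Padé bound `(2 - t) e ^ t ≤ 2 + t` yields `μ (e ^ t - 1) ≤ ℓ`, and the
right-hand side collapses to `(ℓ / t) ^ ℓ = (μ + ℓ / 2) ^ ℓ`. -/

open Real Finset

lemma Real.two_sub_mul_exp_le {x : ℝ} (hx : 0 ≤ x) : (2 - x) * exp x ≤ 2 + x := by
  rcases lt_or_ge x 2 with hx2 | hx2
  · rw [← le_div_iff₀' (by linarith)]
    exact exp_le_two_add_div_two_sub hx hx2
  · nlinarith [exp_pos x]

lemma Real.pow_le_div_pow_mul_exp {x t : ℝ} (hx : 0 ≤ x) (ht : 0 < t) (ℓ : ℕ) :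
    x ^ ℓ ≤ (ℓ / (exp 1 * t)) ^ ℓ * exp (t * x) := by
  rcases eq_or_ne ℓ 0 with rfl | hℓ
  · simpa using one_le_exp (by positivity)
  have hℓ' : (0 : ℝ) < ℓ := by positivity
  calc x ^ ℓ = (ℓ / (exp 1 * t)) ^ ℓ * (exp 1 * (t * x / ℓ)) ^ ℓ := by
        rw [← mul_pow]; congr 1; field_simp
    _ ≤ (ℓ / (exp 1 * t)) ^ ℓ * exp (t * x / ℓ) ^ ℓ := by
        gcongr
        exact exp_one_mul_le_exp
    _ = (ℓ / (exp 1 * t)) ^ ℓ * exp (t * x) := by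
        rw [← exp_nat_mul, mul_div_cancel₀ _ hℓ'.ne']

lemma sum_choose_mul_pow_mul_pow (N : ℕ) (ρ a : ℝ) :
    ∑ k ∈ range (N + 1), (N.choose k : ℝ) * ρ ^ k * (1 - ρ) ^ (N - k) * a ^ k =
      (ρ * a + (1 - ρ)) ^ N := by
  rw [add_pow]
  refine sum_congr rfl fun k _ => ?_
  ring

lemma binomial_moment_le_div_pow_mul_exp (N : ℕ) {ρ : ℝ} (hρ0 : 0 ≤ ρ) (hρ1 : ρ ≤ 1)
    (ℓ : ℕ) {t : ℝ} (ht : 0 < t) :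
    ∑ k ∈ range (N + 1), (N.choose k : ℝ) * ρ ^ k * (1 - ρ) ^ (N - k) * (k : ℝ) ^ ℓ ≤
      (ℓ / (exp 1 * t)) ^ ℓ * exp (N * ρ * (exp t - 1)) := by
  have hmgf_le : (ρ * exp t + (1 - ρ)) ^ N ≤ exp (N * ρ * (exp t - 1)) := by
    rw [mul_assoc, exp_nat_mul]
    gcongr
    linarith [add_one_le_exp (ρ * (exp t - 1))]
  calc _ ≤ ∑ k ∈ range (N + 1), (N.choose k : ℝ) * ρ ^ k * (1 - ρ) ^ (N - k) *
          ((ℓ / (exp 1 * t)) ^ ℓ * exp t ^ k) := by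
        gcongr with k
        rw [← exp_nat_mul, mul_comm (k : ℝ)]
        exact pow_le_div_pow_mul_exp k.cast_nonneg ht ℓ
    _ = (ℓ / (exp 1 * t)) ^ ℓ * (ρ * exp t + (1 - ρ)) ^ N := by
        rw [← sum_choose_mul_pow_mul_pow, mul_sum]
        refine sum_congr rfl fun k _ => ?_
        ring
    _ ≤ _ := by gcongr

lemma mul_exp_div_le_add {μ ℓ : ℝ} (hμ : 0 ≤ μ) (hℓ : 0 < ℓ) :
    μ * exp (ℓ / (μ + ℓ / 2)) ≤ μ + ℓ := by
  set t := ℓ / (μ + ℓ / 2) with ht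
  have hmul : t * (2 * μ + ℓ) = 2 * ℓ := by rw [ht]; field_simp
  have hpade := two_sub_mul_exp_le (x := t) (by positivity)
  -- `(2 - t) (2 μ + ℓ) = 4 μ`, so the Padé bound times `2 μ + ℓ` reads `4 μ e ^ t ≤ 4 μ + 4 ℓ`
  nlinarith [exp_pos t]

theorem binomial_moment_upper_bound
    (N : ℕ) (ρ : ℝ) (hρ0 : 0 ≤ ρ) (hρ1 : ρ ≤ 1) (ℓ : ℕ) (hℓ : 1 ≤ ℓ) :
    ∑ k ∈ Finset.range (N + 1),
        (N.choose k : ℝ) * ρ ^ k * (1 - ρ) ^ (N - k) * (k : ℝ) ^ ℓ ≤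
      ((N : ℝ) * ρ + (ℓ : ℝ) / 2) ^ ℓ := by
  have hℓpos : (0 : ℝ) < ℓ := by exact_mod_cast hℓ
  have hμ : (0 : ℝ) ≤ N * ρ := by positivity
  set t := (ℓ : ℝ) / (N * ρ + ℓ / 2) with ht
  have htpos : 0 < t := by positivity
  calc _ ≤ (ℓ / (exp 1 * t)) ^ ℓ * exp (N * ρ * (exp t - 1)) :=
        binomial_moment_le_div_pow_mul_exp N hρ0 hρ1 ℓ htpos
    _ ≤ (ℓ / (exp 1 * t)) ^ ℓ * exp ℓ := by
        gcongr
        linarith [mul_exp_div_le_add hμ hℓpos]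
    _ = (N * ρ + ℓ / 2) ^ ℓ := by
        rw [← mul_one (ℓ : ℝ), exp_nat_mul, ← mul_pow, ht]
        congr 1
        field_simp
end
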